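/- arXiv:1302.4783 — 3 statements merged into one kernel-verified Lean document; each statement's English description precedes it below -/
import Mathlib

section
/- In any partial deterministic BBI model (where for all a, b, the composition a ∘ b has at most one element), the formula (F ∗ F) → F with F := ¬(⊤ −∗ ¬⊤*) is valid. -/
/-- A non-deterministic monoid: `op : M → M → Set M` with unit `e`,
satisfying identity, commutativity, and associativity of the set-lifted
composition. -/
structure NDM (M : Type) where
  op : M → M → Set M
  e : M
  identity : ∀ a : M, op e a = {a}
  comm : ∀ a b : M, op a b = op b a
  assoc : ∀ a b c : M, (⋃ k ∈ op b c, op a k) = ⋃ l ∈ op a b, op l c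

/-- BBI formulas. -/
inductive BBIForm where
  | atom : ℕ → BBIForm
  | top : BBIForm
  | bot : BBIForm
  | emp : BBIForm               -- ⊤*
  | neg : BBIForm → BBIForm
  | conj : BBIForm → BBIForm → BBIForm
  | disj : BBIForm → BBIForm → BBIForm
  | imp : BBIForm → BBIForm → BBIForm
  | star : BBIForm → BBIForm → BBIForm
  | wand : BBIForm → BBIForm → BBIForm

/-- The BBI forcing relation over a non-deterministic monoid model. -/
def force {M : Type} (N : NDM M) (v : ℕ → Set M) : M → BBIForm → Prop
  | m, BBIForm.atom p => m ∈ v p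
  | _, BBIForm.top => True
  | _, BBIForm.bot => False
  | m, BBIForm.emp => m = N.e
  | m, BBIForm.neg A => ¬ force N v m A
  | m, BBIForm.conj A B => force N v m A ∧ force N v m B
  | m, BBIForm.disj A B => force N v m A ∨ force N v m B
  | m, BBIForm.imp A B => force N v m A → force N v m B
  | m, BBIForm.star A B => ∃ a b : M, m ∈ N.op a b ∧ force N v a A ∧ force N v b B
  | m, BBIForm.wand A B => ∀ a b : M, b ∈ N.op m a → force N v a A → force N v b B

/-!
A world forces `¬(⊤ −∗ ¬⊤*)` exactly when it has an inverse, i.e. `ε ∈ m ∘ x` for some `x`.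
In a partial deterministic model inverses cancel: from `ε ∈ a ∘ a'` and `m ∈ a ∘ b` associativity
gives `b ∈ a' ∘ k` for some `k ∈ a ∘ b`, and determinism forces `k = m`. Then `ε ∈ b ∘ b'` yields
`ε ∈ (m ∘ a') ∘ b' = m ∘ (a' ∘ b')`, so `m` has an inverse as well.
-/

namespace NDM

variable {M : Type} (N : NDM M)

def IsInvertible (m : M) : Prop := ∃ x, N.e ∈ N.op m x

def IsDeterministic : Prop := ∀ a b c d : M, c ∈ N.op a b → d ∈ N.op a b → c = d

variable {N}

theorem mem_op_e (a : M) : a ∈ N.op N.e a := by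
  rw [N.identity]
  rfl

theorem exists_mem_op_assoc {a b c x : M} :
    (∃ k ∈ N.op b c, x ∈ N.op a k) ↔ ∃ l ∈ N.op a b, x ∈ N.op l c := by
  simpa only [Set.mem_iUnion₂, exists_prop] using Set.ext_iff.mp (N.assoc a b c) x

theorem IsInvertible.of_mem_op {m a b : M} (hb : N.IsInvertible b) (hbm : b ∈ N.op m a) :
    N.IsInvertible m := by
  obtain ⟨b', hb'⟩ := hb
  obtain ⟨x, -, hx⟩ := exists_mem_op_assoc.mpr ⟨b, hbm, hb'⟩
  exact ⟨x, hx⟩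

theorem IsDeterministic.mem_inv_op_of_mem_op (hD : N.IsDeterministic) {a a' b m : M}
    (ha : N.e ∈ N.op a a') (hm : m ∈ N.op a b) : b ∈ N.op a' m := by
  have ha' : N.e ∈ N.op a' a := N.comm a a' ▸ ha
  obtain ⟨k, hk, hbk⟩ := exists_mem_op_assoc.mpr ⟨N.e, ha', mem_op_e b⟩
  rwa [hD a b k m hk hm] at hbk

theorem IsDeterministic.isInvertible_of_mem_op (hD : N.IsDeterministic) {a b m : M}
    (hm : m ∈ N.op a b) (ha : N.IsInvertible a) (hb : N.IsInvertible b) : N.IsInvertible m := by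
  obtain ⟨a', ha'⟩ := ha
  exact hb.of_mem_op (N.comm a' m ▸ hD.mem_inv_op_of_mem_op ha' hm)

end NDM

theorem force_neg_wand_top_neg_emp_iff {M : Type} (N : NDM M) (v : ℕ → Set M) (m : M) :
    force N v m (BBIForm.neg (BBIForm.wand BBIForm.top (BBIForm.neg BBIForm.emp))) ↔
      N.IsInvertible m := by
  simp [force, NDM.IsInvertible]

/-- In any partial deterministic BBI model, (F ∗ F) → F is valid,
where F = ¬(⊤ −∗ ¬⊤*). -/
theorem bbi_pd_valid {M : Type} (N : NDM M) (v : ℕ → Set M)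
    (hPD : ∀ a b c d : M, c ∈ N.op a b → d ∈ N.op a b → c = d)
    (m : M) :
    force N v m
      (BBIForm.imp
        (BBIForm.star (BBIForm.neg (BBIForm.wand BBIForm.top (BBIForm.neg BBIForm.emp)))
                      (BBIForm.neg (BBIForm.wand BBIForm.top (BBIForm.neg BBIForm.emp))))
        (BBIForm.neg (BBIForm.wand BBIForm.top (BBIForm.neg BBIForm.emp)))) := by
  rintro ⟨a, b, hm, ha, hb⟩
  rw [force_neg_wand_top_neg_emp_iff] at ha hb ⊢
  exact NDM.IsDeterministic.isInvertible_of_mem_op hPD hm ha hb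
end

section
/- In any total deterministic BBI model (where for all a, b, the composition a ∘ b is a singleton), the formula (¬⊤* −∗ ⊥) → ⊤* is valid. -/
theorem NDM.op_eq_empty_of_force_wand_bot {M : Type} (N : NDM M) (v : ℕ → Set M) {m a : M}
    {A : BBIForm} (h : force N v m (BBIForm.wand A BBIForm.bot)) (ha : force N v a A) :
    N.op m a = ∅ :=
  Set.eq_empty_iff_forall_notMem.mpr fun b hb => h a b hb ha

/-- In any total deterministic BBI model, (¬⊤* −∗ ⊥) → ⊤* is valid. -/
theorem bbi_td_valid {M : Type} (N : NDM M) (v : ℕ → Set M)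
    (hTD : ∀ a b : M, ∃ c : M, N.op a b = {c})
    (m : M) :
    force N v m
      (BBIForm.imp (BBIForm.wand (BBIForm.neg BBIForm.emp) BBIForm.bot) BBIForm.emp) := by
  intro h
  by_contra hm
  obtain ⟨c, hc⟩ := hTD m m
  have hempty : N.op m m = ∅ := N.op_eq_empty_of_force_wand_bot v h hm
  exact Set.singleton_ne_empty c (hc ▸ hempty)
end

section
/- In any BBI model over a non-deterministic monoid in which composition is total (for all a, b, a ∘ b is nonempty), the formula (⊤* ∧ ((p ∗ q) −∗ ⊥)) → ((p −∗ ⊥) ∨ (q −∗ ⊥)) is valid. -/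
/-! At the unit, `A −∗ ⊥` holds exactly when `A` is forced nowhere. If `p` and `q` were both
forced somewhere, totality would compose those two worlds into one forcing `p ∗ q`. -/

section

variable {M : Type} (N : NDM M) (v : ℕ → Set M)

theorem force_wand_bot_unit_iff (A : BBIForm) :
    force N v N.e (BBIForm.wand A BBIForm.bot) ↔ ∀ a, ¬ force N v a A := by
  simp only [force, N.identity, Set.mem_singleton_iff, imp_false]
  exact ⟨fun h a => h a a rfl, fun h a b hb => hb ▸ h a⟩

theorem exists_force_star_of_total (hTot : ∀ a b : M, ∃ c : M, c ∈ N.op a b) {A B : BBIForm}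
    (hA : ∃ a, force N v a A) (hB : ∃ b, force N v b B) :
    ∃ c, force N v c (BBIForm.star A B) := by
  obtain ⟨a, ha⟩ := hA
  obtain ⟨b, hb⟩ := hB
  obtain ⟨c, hc⟩ := hTot a b
  exact ⟨c, a, b, hc, ha, hb⟩

end

/-- In any BBI model with total composition,
(⊤* ∧ ((p ∗ q) −∗ ⊥)) → ((p −∗ ⊥) ∨ (q −∗ ⊥)) is valid. -/
theorem bbi_total_valid {M : Type} (N : NDM M) (v : ℕ → Set M)
    (hTot : ∀ a b : M, ∃ c : M, c ∈ N.op a b)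
    (p q : ℕ) (m : M) :
    force N v m
      (BBIForm.imp
        (BBIForm.conj BBIForm.emp
          (BBIForm.wand (BBIForm.star (BBIForm.atom p) (BBIForm.atom q)) BBIForm.bot))
        (BBIForm.disj (BBIForm.wand (BBIForm.atom p) BBIForm.bot)
                      (BBIForm.wand (BBIForm.atom q) BBIForm.bot))) := by
  rintro ⟨rfl, hStar⟩
  rw [force_wand_bot_unit_iff] at hStar
  rw [force, force_wand_bot_unit_iff, force_wand_bot_unit_iff]
  by_contra! ⟨hp, hq⟩
  obtain ⟨c, hc⟩ := exists_force_star_of_total N v hTot hp hq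
  exact hStar c hc
end
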